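/- For integers n, a ≥ 2, the squared L² turning distance between the regular an-gon and the regular n-gon satisfies ∫₀¹ (f_{an} − f_n)² ds − (∫₀¹ (f_{an} − f_n) ds)² = (π²/(a²n²))·(a²−1)/3; equivalently, d₂(R_{an}, R_n) = (π/(an))·√((a²−1)/3). -/

import Mathlib

open MeasureTheory Real

/-- Turning function of the unit-perimeter regular `m`-gon. -/
noncomputable def turnFun (m : ℕ) (s : ℝ) : ℝ := (2 * π / m) * (⌊(m : ℝ) * s⌋ : ℝ)

private lemma sum_mod_blocks (a : ℕ) (f : ℕ → ℝ) (n : ℕ) :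
    ∑ k ∈ Finset.range (a * n), f (k % a) = n * ∑ j ∈ Finset.range a, f j := by
  induction n with
  | zero => simp
  | succ p ih =>
    have hstep : ∑ x ∈ Finset.range a, f ((a * p + x) % a) = ∑ x ∈ Finset.range a, f x :=
      Finset.sum_congr rfl fun x hx => by
        rw [Nat.mul_add_mod, Nat.mod_eq_of_lt (Finset.mem_range.1 hx)]
    rw [Nat.mul_succ, Finset.sum_range_add, ih, hstep]
    push_cast; ring

private lemma sum_id_real (a : ℕ) : ∑ j ∈ Finset.range a, (j : ℝ) = a * (a - 1) / 2 := by
  induction a with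
  | zero => simp
  | succ k ih => rw [Finset.sum_range_succ, ih]; push_cast; ring

private lemma sum_sq_real (a : ℕ) :
    ∑ j ∈ Finset.range a, (j : ℝ) ^ 2 = a * (a - 1) * (2 * a - 1) / 6 := by
  induction a with
  | zero => simp
  | succ k ih => rw [Finset.sum_range_succ, ih]; push_cast; ring

private lemma turn_diff_eq (n a k : ℕ) (ha : 0 < a) (hn : 0 < n) {s : ℝ}
    (h1 : (k : ℝ) / ((a : ℝ) * n) < s) (h2 : s < ((k : ℝ) + 1) / ((a : ℝ) * n)) :
    turnFun (a * n) s - turnFun n s = (2 * π / ((a : ℝ) * n)) * ((k % a : ℕ) : ℝ) := by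
  have haR : (0 : ℝ) < a := Nat.cast_pos.2 ha
  have hnR : (0 : ℝ) < n := Nat.cast_pos.2 hn
  have hX : (0 : ℝ) < (a : ℝ) * n := mul_pos haR hnR
  rw [div_lt_iff₀ hX] at h1
  rw [lt_div_iff₀ hX] at h2
  have hms1 : (k : ℝ) < (a : ℝ) * n * s := by nlinarith
  have hms2 : (a : ℝ) * n * s < (k : ℝ) + 1 := by nlinarith
  have hf1 : ⌊((a * n : ℕ) : ℝ) * s⌋ = (k : ℤ) := by
    rw [Int.floor_eq_iff]
    push_cast
    constructor
    · linarith
    · linarith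
  have hdm : a * (k / a) + k % a = k := Nat.div_add_mod k a
  have hmlt : k % a < a := Nat.mod_lt k ha
  have hkub : k + 1 ≤ a * (k / a) + a := by omega
  have hklb : a * (k / a) ≤ k := by omega
  have hdmR : (k : ℝ) = (a : ℝ) * ((k / a : ℕ) : ℝ) + ((k % a : ℕ) : ℝ) := by
    exact_mod_cast hdm.symm
  have hkubR : (k : ℝ) + 1 ≤ (a : ℝ) * ((k / a : ℕ) : ℝ) + a := by exact_mod_cast hkub
  have hklbR : (a : ℝ) * ((k / a : ℕ) : ℝ) ≤ (k : ℝ) := by exact_mod_cast hklb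
  have hf2 : ⌊(n : ℝ) * s⌋ = ((k / a : ℕ) : ℤ) := by
    rw [Int.floor_eq_iff]
    constructor
    · show (((k / a : ℕ) : ℤ) : ℝ) ≤ (n : ℝ) * s
      rw [Int.cast_natCast]
      nlinarith
    · show (n : ℝ) * s < (((k / a : ℕ) : ℤ) : ℝ) + 1
      rw [Int.cast_natCast]
      nlinarith
  unfold turnFun
  rw [hf1, hf2]
  simp only [Int.cast_natCast, Nat.cast_mul]
  have hr : ((k % a : ℕ) : ℝ) = (k : ℝ) - (a : ℝ) * ((k / a : ℕ) : ℝ) := by linarith [hdmR]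
  rw [hr]
  field_simp

theorem d2_an_n (n a : ℕ) (hn : 2 ≤ n) (ha : 2 ≤ a) :
    (∫ s in (0:ℝ)..1, (turnFun (a * n) s - turnFun n s) ^ 2)
        - (∫ s in (0:ℝ)..1, (turnFun (a * n) s - turnFun n s)) ^ 2
      = (π ^ 2 / ((a : ℝ) ^ 2 * (n : ℝ) ^ 2)) * (((a : ℝ) ^ 2 - 1) / 3) ∧
    Real.sqrt ((∫ s in (0:ℝ)..1, (turnFun (a * n) s - turnFun n s) ^ 2)
        - (∫ s in (0:ℝ)..1, (turnFun (a * n) s - turnFun n s)) ^ 2)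
      = (π / ((a : ℝ) * n)) * Real.sqrt (((a : ℝ) ^ 2 - 1) / 3) := by
  have ha0 : 0 < a := by omega
  have hn0 : 0 < n := by omega
  have haR : (0 : ℝ) < a := Nat.cast_pos.2 ha0
  have hnR : (0 : ℝ) < n := Nat.cast_pos.2 hn0
  have hX : (0 : ℝ) < (a : ℝ) * n := mul_pos haR hnR
  set P : ℕ → ℝ := fun k => (k : ℝ) / ((a : ℝ) * n) with hP
  set c : ℕ → ℝ := fun k => (2 * π / ((a : ℝ) * n)) * ((k % a : ℕ) : ℝ) with hc
  have hPle : ∀ k : ℕ, P k ≤ P (k + 1) := by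
    intro k
    simp only [hP]
    gcongr
    · push_cast; linarith
  have hPdiff : ∀ k : ℕ, P (k + 1) - P k = 1 / ((a : ℝ) * n) := by
    intro k
    simp only [hP]
    push_cast
    field_simp
    ring
  have key : ∀ k, k < a * n →
      (fun s => turnFun (a * n) s - turnFun n s)
        =ᵐ[volume.restrict (Set.Ioc (P k) (P (k + 1)))] fun _ => c k := by
    intro k hk
    rw [← Measure.restrict_congr_set Ioo_ae_eq_Ioc]
    filter_upwards [ae_restrict_mem measurableSet_Ioo] with s hs
    have h2 : s < ((k : ℝ) + 1) / ((a : ℝ) * n) := by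
      have := hs.2
      simp only [hP] at this
      push_cast at this
      exact this
    exact turn_diff_eq n a k ha0 hn0 hs.1 h2
  have key2 : ∀ k, k < a * n →
      (fun s => (turnFun (a * n) s - turnFun n s) ^ 2)
        =ᵐ[volume.restrict (Set.Ioc (P k) (P (k + 1)))] fun _ => (c k) ^ 2 := by
    intro k hk
    exact (key k hk).mono fun s hs => by
      have h' : turnFun (a * n) s - turnFun n s = c k := hs
      show (turnFun (a * n) s - turnFun n s) ^ 2 = c k ^ 2
      rw [h']
  have hvol : ∀ k : ℕ, (volume (Set.Ioc (P k) (P (k + 1)))).toReal = 1 / ((a : ℝ) * n) := by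
    intro k
    rw [Real.volume_Ioc, ENNReal.toReal_ofReal (by linarith [hPdiff k, hPle k]), hPdiff k]
  have hint : ∀ k, k < a * n →
      IntervalIntegrable (fun s => turnFun (a * n) s - turnFun n s) volume (P k) (P (k + 1)) := by
    intro k hk
    rw [intervalIntegrable_iff_integrableOn_Ioc_of_le (hPle k)]
    exact (integrableOn_const measure_Ioc_lt_top.ne).congr (key k hk).symm
  have hint2 : ∀ k, k < a * n →
      IntervalIntegrable (fun s => (turnFun (a * n) s - turnFun n s) ^ 2) volume
        (P k) (P (k + 1)) := by
    intro k hk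
    rw [intervalIntegrable_iff_integrableOn_Ioc_of_le (hPle k)]
    exact (integrableOn_const measure_Ioc_lt_top.ne).congr (key2 k hk).symm
  have hval : ∀ k, k < a * n →
      (∫ s in P k..P (k + 1), (turnFun (a * n) s - turnFun n s)) = c k * (1 / ((a : ℝ) * n)) := by
    intro k hk
    rw [intervalIntegral.integral_of_le (hPle k), integral_congr_ae (key k hk),
      setIntegral_const, Measure.real, hvol k, smul_eq_mul, mul_comm]
  have hval2 : ∀ k, k < a * n →
      (∫ s in P k..P (k + 1), (turnFun (a * n) s - turnFun n s) ^ 2)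
        = (c k) ^ 2 * (1 / ((a : ℝ) * n)) := by
    intro k hk
    rw [intervalIntegral.integral_of_le (hPle k), integral_congr_ae (key2 k hk),
      setIntegral_const, Measure.real, hvol k, smul_eq_mul, mul_comm]
  have hP0 : P 0 = 0 := by simp [hP]
  have hPm : P (a * n) = 1 := by
    simp only [hP]
    push_cast
    field_simp
  have hsum1 : (∫ s in (0:ℝ)..1, (turnFun (a * n) s - turnFun n s))
      = ∑ k ∈ Finset.range (a * n), c k * (1 / ((a : ℝ) * n)) := by
    have h := intervalIntegral.sum_integral_adjacent_intervals (μ := volume) (a := P) hint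
    rw [hP0, hPm] at h
    rw [← h]
    exact Finset.sum_congr rfl fun k hk => hval k (Finset.mem_range.1 hk)
  have hsum2 : (∫ s in (0:ℝ)..1, (turnFun (a * n) s - turnFun n s) ^ 2)
      = ∑ k ∈ Finset.range (a * n), (c k) ^ 2 * (1 / ((a : ℝ) * n)) := by
    have h := intervalIntegral.sum_integral_adjacent_intervals (μ := volume) (a := P) hint2
    rw [hP0, hPm] at h
    rw [← h]
    exact Finset.sum_congr rfl fun k hk => hval2 k (Finset.mem_range.1 hk)
  have hI1 : (∫ s in (0:ℝ)..1, (turnFun (a * n) s - turnFun n s))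
      = π * ((a : ℝ) - 1) / ((a : ℝ) * n) := by
    rw [hsum1]
    have hb1 : ∑ k ∈ Finset.range (a * n), ((k % a : ℕ) : ℝ)
        = n * ∑ j ∈ Finset.range a, (j : ℝ) := sum_mod_blocks a (fun j => (j : ℝ)) n
    have hthis : ∑ k ∈ Finset.range (a * n), c k * (1 / ((a : ℝ) * n))
        = (2 * π / ((a : ℝ) * n)) * (1 / ((a : ℝ) * n))
            * ∑ k ∈ Finset.range (a * n), ((k % a : ℕ) : ℝ) := by
      rw [Finset.mul_sum]
      exact Finset.sum_congr rfl fun k _ => by simp only [hc]; ring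
    rw [hthis, hb1, sum_id_real a]
    field_simp
  have hI2 : (∫ s in (0:ℝ)..1, (turnFun (a * n) s - turnFun n s) ^ 2)
      = 2 * π ^ 2 * ((a : ℝ) - 1) * (2 * (a : ℝ) - 1) / (3 * (a : ℝ) ^ 2 * (n : ℝ) ^ 2) := by
    rw [hsum2]
    have hb2 : ∑ k ∈ Finset.range (a * n), ((k % a : ℕ) : ℝ) ^ 2
        = n * ∑ j ∈ Finset.range a, (j : ℝ) ^ 2 := sum_mod_blocks a (fun j => (j : ℝ) ^ 2) n
    have hthis : ∑ k ∈ Finset.range (a * n), (c k) ^ 2 * (1 / ((a : ℝ) * n))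
        = (2 * π / ((a : ℝ) * n)) ^ 2 * (1 / ((a : ℝ) * n))
            * ∑ k ∈ Finset.range (a * n), ((k % a : ℕ) : ℝ) ^ 2 := by
      rw [Finset.mul_sum]
      exact Finset.sum_congr rfl fun k _ => by simp only [hc]; ring
    rw [hthis, hb2, sum_sq_real a]
    field_simp
    ring
  have hmain : (∫ s in (0:ℝ)..1, (turnFun (a * n) s - turnFun n s) ^ 2)
        - (∫ s in (0:ℝ)..1, (turnFun (a * n) s - turnFun n s)) ^ 2
      = (π ^ 2 / ((a : ℝ) ^ 2 * (n : ℝ) ^ 2)) * (((a : ℝ) ^ 2 - 1) / 3) := by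
    rw [hI1, hI2]
    field_simp
    ring
  refine ⟨hmain, ?_⟩
  rw [hmain]
  have hsq : π ^ 2 / ((a : ℝ) ^ 2 * (n : ℝ) ^ 2) = (π / ((a : ℝ) * n)) ^ 2 := by ring
  rw [hsq, Real.sqrt_mul (sq_nonneg _), Real.sqrt_sq (by positivity)]
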